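/- For 0 < t ≤ π/2, let s(t) = π·cos(t/2)/(cos(t/2) + 1) and GG(t) = 2π·cos(s(t))/(cos(s(t)) + 1). Then GG is strictly increasing on (0, 2π/3), GG(0) = 0, GG(2π/3) = 2π/3, and GG(t) < t for all t in (0, 2π/3). -/
import Mathlib


open Real

noncomputable def s (t : ℝ) : ℝ := π * Real.cos (t / 2) / (Real.cos (t / 2) + 1)

noncomputable def GG (t : ℝ) : ℝ := 2 * π * Real.cos (s t) / (Real.cos (s t) + 1)

lemma cos_lt_cos' {x y : ℝ} (hx : 0 ≤ x) (hy : y ≤ π) (hxy : x < y) :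
    Real.cos y < Real.cos x :=
  Real.strictAntiOn_cos ⟨hx, by linarith⟩ ⟨by linarith, hy⟩ hxy

lemma cos_tangent {a b : ℝ} (h0 : 0 ≤ a) (hab : a ≤ b) (hb : b ≤ π/2) :
    Real.cos b ≤ Real.cos a - Real.sin a * (b - a) := by
  have hpi := Real.pi_pos
  set d := (b - a)/2 with hd
  set m := (a + b)/2 with hm
  have hd0 : 0 ≤ d := by simp [hd]; linarith
  have hdlt : d < π/2 := by simp [hd]; linarith
  have hm0 : 0 ≤ m := by simp [hm]; linarith
  have hmle : m ≤ π/2 := by simp [hm]; linarith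
  have hcosd : 0 < Real.cos d := Real.cos_pos_of_mem_Ioo ⟨by linarith, hdlt⟩
  have key1 : d * Real.cos d ≤ Real.sin d := by
    rcases eq_or_lt_of_le hd0 with h | h
    · simp [← h]
    · have := Real.lt_tan h hdlt
      rw [Real.tan_eq_sin_div_cos, lt_div_iff₀ hcosd] at this
      linarith
  have key2 : Real.sin a ≤ Real.sin m :=
    Real.sin_le_sin_of_le_of_le_pi_div_two (by linarith) hmle (by simp [hm]; linarith)
  have key3 : Real.sin a ≤ Real.sin b :=
    Real.sin_le_sin_of_le_of_le_pi_div_two (by linarith) hb hab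
  have hsinm : 0 ≤ Real.sin m := Real.sin_nonneg_of_nonneg_of_le_pi hm0 (by linarith)
  have hsind : 0 ≤ Real.sin d := Real.sin_nonneg_of_nonneg_of_le_pi hd0 (by linarith)
  have hcc : Real.cos a - Real.cos b = 2 * Real.sin m * Real.sin d := by
    rw [Real.cos_sub_cos]
    have : (a - b)/2 = -d := by rw [hd]; ring
    rw [show (a + b)/2 = m from rfl, this, Real.sin_neg]
    ring
  have hprod : Real.sin (m + d) + Real.sin (m - d) = 2 * Real.sin m * Real.cos d := by
    rw [Real.sin_add, Real.sin_sub]; ring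
  have hmd1 : m + d = b := by rw [hm, hd]; ring
  have hmd2 : m - d = a := by rw [hm, hd]; ring
  rw [hmd1, hmd2] at hprod
  have step : 2 * Real.sin m * Real.sin d ≥ 2 * Real.sin m * (d * Real.cos d) := by
    apply mul_le_mul_of_nonneg_left key1 (by linarith)
  nlinarith [mul_le_mul_of_nonneg_left key3 hd0]

lemma cos_half_mem {t : ℝ} (h1 : 0 < t) (h2 : t < 2*π/3) :
    1/2 < Real.cos (t/2) ∧ Real.cos (t/2) < 1 := by
  have hpi := Real.pi_pos
  constructor
  · have := cos_lt_cos' (x := t/2) (y := π/3) (by linarith) (by linarith) (by linarith)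
    rw [Real.cos_pi_div_three] at this; linarith
  · have := cos_lt_cos' (x := 0) (y := t/2) le_rfl (by linarith) (by linarith)
    rw [Real.cos_zero] at this; linarith

lemma s_mem {t : ℝ} (h1 : 0 < t) (h2 : t < 2*π/3) : π/3 < s t ∧ s t < π/2 := by
  have hpi := Real.pi_pos
  obtain ⟨hc1, hc2⟩ := cos_half_mem h1 h2
  set c := Real.cos (t/2)
  have hc0 : 0 < c + 1 := by linarith
  rw [s]
  constructor
  · rw [lt_div_iff₀ hc0]; nlinarith
  · rw [div_lt_iff₀ hc0]; nlinarith

lemma cos_s_mem {t : ℝ} (h1 : 0 < t) (h2 : t < 2*π/3) :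
    0 < Real.cos (s t) ∧ Real.cos (s t) < 1/2 := by
  have hpi := Real.pi_pos
  obtain ⟨hs1, hs2⟩ := s_mem h1 h2
  constructor
  · have := cos_lt_cos' (x := s t) (y := π/2) (by linarith) (by linarith) hs2
    rw [Real.cos_pi_div_two] at this; linarith
  · have := cos_lt_cos' (x := π/3) (y := s t) (by linarith) (by linarith) hs1
    rw [Real.cos_pi_div_three] at this; linarith

lemma GG_zero : GG 0 = 0 := by
  have : s 0 = π/2 := by rw [s]; norm_num
  rw [GG, this, Real.cos_pi_div_two]; norm_num

lemma GG_endpoint : GG (2*π/3) = 2*π/3 := by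
  have h1 : (2*π/3)/2 = π/3 := by ring
  have : s (2*π/3) = π/3 := by
    rw [s, h1, Real.cos_pi_div_three]; ring
  rw [GG, this, Real.cos_pi_div_three]; ring

lemma GG_mono : StrictMonoOn GG (Set.Ioo 0 (2*π/3)) := by
  have hpi := Real.pi_pos
  intro a ha b hb hab
  simp only [Set.mem_Ioo] at ha hb
  have hca := cos_half_mem ha.1 ha.2
  have hcb := cos_half_mem hb.1 hb.2
  have hc : Real.cos (b/2) < Real.cos (a/2) :=
    cos_lt_cos' (by linarith [ha.1]) (by linarith [hb.2]) (by linarith)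
  have hs : s b < s a := by
    rw [s, s, div_lt_div_iff₀ (by linarith [hcb.1]) (by linarith [hca.1])]
    nlinarith
  have hsa := s_mem ha.1 ha.2
  have hsb := s_mem hb.1 hb.2
  have hcs : Real.cos (s a) < Real.cos (s b) :=
    cos_lt_cos' (by linarith [hsb.1]) (by linarith [hsa.2]) hs
  have h0a := (cos_s_mem ha.1 ha.2).1
  have h0b := (cos_s_mem hb.1 hb.2).1
  rw [GG, GG, div_lt_div_iff₀ (by linarith) (by linarith)]
  nlinarith

lemma sqrt3_bounds : 1.732 < Real.sqrt 3 ∧ Real.sqrt 3 < 1.7321 := by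
  have hr2 : Real.sqrt 3 ^ 2 = 3 := Real.sq_sqrt (by norm_num)
  have hr0 : 0 ≤ Real.sqrt 3 := Real.sqrt_nonneg 3
  constructor <;> nlinarith

lemma case1poly {x c : ℝ} (hx0 : 0 < x) (hx : x ≤ 1/2) (hc1 : 1/2 < c) (hc2 : c < 1)
    (hquad : 1 - c < x^2/2) : π * (1 - c) / (2 * (c + 1)) * (π - x) ≤ x := by
  have hpil : (3.141592 : ℝ) < π := Real.pi_gt_d6
  have hpiu : π < 3.141593 := Real.pi_lt_d6
  have hcp : (0:ℝ) < c + 1 := by linarith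
  rw [div_mul_eq_mul_div, div_le_iff₀ (by linarith)]
  have e1 : π * (1 - c) * (π - x) ≤ π * (x^2/2) * (π - x) := by
    apply mul_le_mul_of_nonneg_right _ (by linarith)
    apply mul_le_mul_of_nonneg_left (by linarith) (by linarith)
  have e2 : π * (x^2/2) * (π - x) ≤ 3 * x := by
    have hh1 : π * x ≤ π * (1/2) := mul_le_mul_of_nonneg_left hx (by linarith)
    have hh2 : π * x * (π - x) ≤ (π * (1/2)) * π :=
      mul_le_mul hh1 (by linarith) (by linarith) (by positivity)
    have : π * x * (π - x) ≤ 6 := by nlinarith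
    nlinarith
  have e3 : 3 * x ≤ x * (2 * (c + 1)) := by nlinarith
  linarith

lemma case2poly {u r : ℝ} (hu0 : 0 < u) (huu : u ≤ 11/20)
    (hrl : 1.732 < r) (hru : r < 1.7321) :
    18 * u < r * π * ((8/5)*u - (3/5)*u^2) * (2*π/3 + u) := by
  have hpil : (3.141592 : ℝ) < π := Real.pi_gt_d6
  have hpiu : π < 3.141593 := Real.pi_lt_d6
  have hB : (16/15)*π ≤ (8/5 - 3/5*u)*(2*π/3+u) := by
    nlinarith [mul_le_mul_of_nonneg_left huu hu0.le,
      mul_lt_mul_of_pos_left hpiu hu0]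
  have hrep : (5.4412 : ℝ) < r * π := by nlinarith
  have hB2 : (3.351 : ℝ) < (8/5 - 3/5*u)*(2*π/3+u) := by nlinarith
  have key : 18 < r * π * ((8/5) - (3/5)*u) * (2*π/3 + u) := by
    have := mul_le_mul hrep.le hB2.le (by norm_num) (by positivity)
    calc (18:ℝ) < 5.4412 * 3.351 := by norm_num
      _ ≤ r * π * ((8/5 - 3/5*u)*(2*π/3+u)) := this
      _ = r * π * ((8/5) - (3/5)*u) * (2*π/3 + u) := by ring
  have expand : r * π * ((8/5)*u - (3/5)*u^2) * (2*π/3 + u)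
      = (r * π * ((8/5) - (3/5)*u) * (2*π/3 + u)) * u := by ring
  rw [expand]
  calc 18 * u = 18 * u := rfl
    _ < (r * π * ((8/5) - (3/5)*u) * (2*π/3 + u)) * u := by
        apply mul_lt_mul_of_pos_right key hu0

lemma clowpoly {u r su cu : ℝ} (hu0 : 0 < u) (huu : u ≤ 11/20)
    (hrl : 1.732 < r) (hru : r < 1.7321)
    (hsinu : u - u^3/6 - u^4*(5/96) ≤ su) (hcosu : 1 - u^2/2 ≤ cu) :
    (8/5)*u - (3/5)*u^2 ≤ 2*((1/2)*cu + (r/2)*su) - 1 := by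
  have hr0 : (0:ℝ) ≤ r := by linarith
  have hsu : r * (u - u^3/6 - u^4*(5/96)) ≤ r * su := mul_le_mul_of_nonneg_left hsinu hr0
  have h2 : u^2 ≤ (11/20)*u := by nlinarith
  have h3 : u^3 ≤ (11/20)^2*u := by nlinarith
  have h4 : u^4 ≤ (11/20)^3*u := by nlinarith
  nlinarith [mul_le_mul_of_nonneg_left h3 hr0, mul_le_mul_of_nonneg_left h4 hr0,
    mul_pos hu0 hu0]

lemma case2assemble {x c r : ℝ} (hc1 : 1/2 < c) (hc2 : c ≤ 1) (hx : 1/2 < x) (hx3 : x < π/3)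
    (hrl : 1.732 < r) (hru : r < 1.7321)
    (hclow : (8/5)*(π/3-x) - (3/5)*(π/3-x)^2 ≤ 2*c - 1) :
    (1/2 - r/2 * (π * (2*c - 1) / (3*(c+1)))) * (π - x) < x := by
  have hpil : (3.141592 : ℝ) < π := Real.pi_gt_d6
  have hpiu : π < 3.141593 := Real.pi_lt_d6
  have hu0 : 0 < π/3 - x := by linarith
  have huu : π/3 - x ≤ 11/20 := by linarith
  have hcp : (0:ℝ) < c + 1 := by linarith
  have hpoly := case2poly hu0 huu hrl hru
  have hklow0 : (0:ℝ) ≤ (8/5)*(π/3-x) - (3/5)*(π/3-x)^2 := by nlinarith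
  have hmono : r * π * ((8/5)*(π/3-x) - (3/5)*(π/3-x)^2) * (2*π/3 + (π/3-x))
      ≤ r * π * (2*c - 1) * (2*π/3 + (π/3-x)) := by
    apply mul_le_mul_of_nonneg_right _ (by linarith)
    apply mul_le_mul_of_nonneg_left _ (by positivity)
    linarith
  have hfin : 9 * (π/3-x) * (c+1) < r * π * (2*c - 1) * (π - x) := by
    have hle : 9 * (π/3-x) * (c+1) ≤ 18 * (π/3-x) := by nlinarith
    have : (2*π/3 + (π/3-x)) = π - x := by ring
    rw [this] at hpoly hmono
    linarith
  have expand : (1/2 - r/2 * (π * (2*c - 1) / (3*(c+1)))) * (π - x)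
      = (π-x)/2 - r*π*(2*c-1)*(π-x)/(6*(c+1)) := by field_simp; ring
  rw [expand, sub_lt_iff_lt_add, ← sub_lt_iff_lt_add', lt_div_iff₀ (by linarith : (0:ℝ) < 6*(c+1))]
  nlinarith [hfin]

lemma GG_lt {t : ℝ} (h1 : 0 < t) (h2 : t < 2*π/3) : GG t < t := by
  have hpi := Real.pi_pos
  have hpil : (3.141592 : ℝ) < π := Real.pi_gt_d6
  have hpiu : π < 3.141593 := Real.pi_lt_d6
  obtain ⟨hc1, hc2⟩ := cos_half_mem h1 h2
  obtain ⟨hs1, hs2⟩ := s_mem h1 h2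
  obtain ⟨hcs0, hcs2⟩ := cos_s_mem h1 h2
  have hx0 : 0 < t/2 := by linarith
  have hx3 : t/2 < π/3 := by linarith
  have main : Real.cos (s t) * (π - t/2) < t/2 := by
    rcases le_or_gt (t/2) (1/2) with hcase | hcase
    · have hsin : Real.cos (s t) < π/2 - s t := by
        have := Real.sin_lt (x := π/2 - s t) (by linarith)
        rwa [Real.sin_pi_div_two_sub] at this
      have hval : π/2 - s t = π * (1 - Real.cos (t/2)) / (2 * (Real.cos (t/2) + 1)) := by
        rw [s]; field_simp; ring
      have hquad : 1 - Real.cos (t/2) < (t/2)^2/2 := by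
        have := Real.one_sub_sq_div_two_lt_cos (x := t/2) (by positivity)
        linarith
      calc Real.cos (s t) * (π - t/2) < (π/2 - s t) * (π - t/2) := by
            apply mul_lt_mul_of_pos_right hsin; linarith
        _ = π * (1 - Real.cos (t/2)) / (2 * (Real.cos (t/2) + 1)) * (π - t/2) := by rw [hval]
        _ ≤ t/2 := case1poly hx0 hcase hc1 hc2 hquad
    · have hu0 : 0 < π/3 - t/2 := by linarith
      have huu : π/3 - t/2 ≤ 11/20 := by linarith
      obtain ⟨hrl, hru⟩ := sqrt3_bounds
      have hr0 : (0:ℝ) ≤ Real.sqrt 3 := Real.sqrt_nonneg 3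
      have hsinu : (π/3 - t/2) - (π/3 - t/2)^3/6 - (π/3 - t/2)^4*(5/96)
          ≤ Real.sin (π/3 - t/2) := by
        have hb := Real.sin_bound (x := π/3 - t/2) (by rw [abs_of_pos hu0]; linarith)
        rw [abs_of_pos hu0] at hb
        have := (abs_le.mp hb).1
        nlinarith [pow_pos hu0 4]
      have hcosu : 1 - (π/3 - t/2)^2/2 ≤ Real.cos (π/3 - t/2) :=
        Real.one_sub_sq_div_two_le_cos
      have hcexp : Real.cos (t/2)
          = (1/2) * Real.cos (π/3 - t/2) + (Real.sqrt 3/2) * Real.sin (π/3 - t/2) := by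
        rw [show t/2 = π/3 - (π/3 - t/2) by ring, Real.cos_sub, Real.cos_pi_div_three,
          Real.sin_pi_div_three]
        ring_nf
      have hclow : (8/5)*(π/3 - t/2) - (3/5)*(π/3 - t/2)^2 ≤ 2 * Real.cos (t/2) - 1 := by
        rw [hcexp]
        have := clowpoly hu0 huu hrl hru hsinu hcosu
        linarith
      have htan : Real.cos (s t) ≤ 1/2 - (Real.sqrt 3/2) * (s t - π/3) := by
        have := cos_tangent (a := π/3) (b := s t) (by positivity) hs1.le hs2.le
        rw [Real.cos_pi_div_three, Real.sin_pi_div_three] at this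
        linarith
      have hsval : s t - π/3 = π * (2 * Real.cos (t/2) - 1) / (3*(Real.cos (t/2) + 1)) := by
        rw [s]; field_simp; ring
      calc Real.cos (s t) * (π - t/2) ≤ (1/2 - Real.sqrt 3/2 * (s t - π/3)) * (π - t/2) := by
            apply mul_le_mul_of_nonneg_right htan (by linarith)
        _ = (1/2 - Real.sqrt 3/2 * (π * (2 * Real.cos (t/2) - 1) / (3*(Real.cos (t/2) + 1))))
              * (π - t/2) := by rw [hsval]
        _ < t/2 := case2assemble hc1 hc2.le hcase hx3 hrl hru hclow
  have hcs1 : (0:ℝ) < Real.cos (s t) + 1 := by linarith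
  rw [GG, div_lt_iff₀ hcs1]
  nlinarith [main]

theorem stmt_14 :
    StrictMonoOn GG (Set.Ioo 0 (2 * π / 3)) ∧
    GG 0 = 0 ∧ GG (2 * π / 3) = 2 * π / 3 ∧
    ∀ t ∈ Set.Ioo 0 (2 * π / 3), GG t < t := by
  refine ⟨GG_mono, GG_zero, GG_endpoint, fun t ht => ?_⟩
  exact GG_lt ht.1 ht.2
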